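/- arXiv:1406.0378 — 2 statements merged into one kernel-verified Lean document; each statement's English description precedes it below -/
import Mathlib

section
/- Let G be a finite simple graph with at least two vertices and no well-connected vertex, and let n ≥ 2. Then the connective eccentric index of the join nG of n disjoint copies of G equals n·|E(G)| + (n(n−1)/2)·|V(G)|². -/
/-!
Two vertices of `nG` in different copies of `G` are adjacent, two in the same copy have a common
neighbour in another copy (`n ≥ 2`), and a vertex `v` of `G` that is not well-connected has a
non-neighbour in its own copy; so every vertex of `nG` has eccentricity exactly `2`, and
`C^ξ(nG) = (∑ deg) / 2 = |E(nG)|`. The degree of `(i, v)` in `nG` is `deg_G v + (n - 1)|V|`, so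
the handshake lemma gives `|E(nG)| = n |E(G)| + (n choose 2) |V|²`.
-/

/-- The eccentricity of a vertex `v` in a finite graph `G`:
the maximum distance from `v` to any other vertex. -/
noncomputable def eccentricity {V : Type*} [Fintype V] (G : SimpleGraph V) (v : V) : ℕ :=
  Finset.univ.sup fun u => G.dist v u

/-- The connective eccentric index `C^ξ(G) = ∑_v deg(v)/ε(v)`, as a rational number. -/
noncomputable def connEccIndex {V : Type*} [Fintype V] (G : SimpleGraph V) : ℚ :=
  letI := Classical.decRel G.Adj
  ∑ v : V, (G.degree v : ℚ) / (eccentricity G v)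

/-- The number of edges of `G`. -/
noncomputable def numEdges {V : Type*} (G : SimpleGraph V) : ℕ := G.edgeSet.ncard

/-- A vertex is well-connected if it is adjacent to every other vertex. -/
def IsWellConnected {V : Type*} (G : SimpleGraph V) (v : V) : Prop :=
  ∀ u : V, u ≠ v → G.Adj v u

/-- The join `G₁ + ⋯ + G_k` of a family of graphs on pairwise disjoint vertex sets:
all edges of the `G i`, together with all pairs of vertices lying in two different parts. -/
def multiJoin {ι : Type*} {V : ι → Type*} (G : ∀ i, SimpleGraph (V i)) :
    SimpleGraph (Σ i, V i) where
  Adj x y := x.1 ≠ y.1 ∨ ∃ h : x.1 = y.1, (G y.1).Adj (h ▸ x.2) y.2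
  symm := by
    constructor
    rintro ⟨i, u⟩ ⟨j, v⟩ h
    dsimp only at h ⊢
    rcases h with hne | ⟨rfl, hadj⟩
    · exact Or.inl hne.symm
    · exact Or.inr ⟨rfl, (G i).symm.symm _ _ hadj⟩
  loopless := by
    constructor
    rintro ⟨i, u⟩ h
    dsimp only at h
    rcases h with hne | ⟨h, hadj⟩
    · exact hne rfl
    · exact (G i).loopless.irrefl u hadj

/-- The join `nG` of `n` disjoint copies of `G`. -/
def nJoin {V : Type*} (n : ℕ) (G : SimpleGraph V) : SimpleGraph (Σ _ : Fin n, V) :=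
  multiJoin fun _ : Fin n => G

open Finset SimpleGraph

lemma dist_le_two_of_adj_of_adj {V : Type*} {G : SimpleGraph V} {x y z : V}
    (hxz : G.Adj x z) (hzy : G.Adj z y) : G.dist x y ≤ 2 :=
  dist_le (.cons hxz hzy.toWalk)

lemma numEdges_eq_card_edgeFinset {V : Type*} (G : SimpleGraph V) [Fintype G.edgeSet] :
    numEdges G = #G.edgeFinset := by
  rw [numEdges, ← coe_edgeFinset, Set.ncard_coe_finset]

section Eccentricity

variable {V : Type*} [Fintype V] (G : SimpleGraph V)

lemma dist_le_eccentricity (v u : V) : G.dist v u ≤ eccentricity G v :=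
  le_sup (mem_univ u)

lemma eccentricity_le_iff {v : V} {k : ℕ} : eccentricity G v ≤ k ↔ ∀ u, G.dist v u ≤ k :=
  Finset.sup_le_iff.trans (by simp)

lemma connEccIndex_of_forall_eccentricity_eq {k : ℕ} (h : ∀ v, eccentricity G v = k) :
    connEccIndex G = 2 * numEdges G / k := by
  classical
  have hsum := G.sum_degrees_eq_twice_card_edges
  rw [← numEdges_eq_card_edgeFinset] at hsum
  simp only [connEccIndex, h, ← sum_div]
  exact_mod_cast congrArg (fun m : ℕ => (m : ℚ) / k) hsum

end Eccentricity

section MultiJoin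

variable {ι : Type*} {V : ι → Type*} (G : ∀ i, SimpleGraph (V i))

@[simp]
lemma multiJoin_adj_mk_mk_self {i : ι} {u v : V i} :
    (multiJoin G).Adj ⟨i, u⟩ ⟨i, v⟩ ↔ (G i).Adj u v :=
  ⟨fun h => h.elim (absurd rfl) fun ⟨_, h⟩ => h, fun h => .inr ⟨rfl, h⟩⟩

lemma multiJoin_adj_of_fst_ne {x y : Σ i, V i} (h : x.1 ≠ y.1) : (multiJoin G).Adj x y :=
  .inl h

variable [Fintype ι] [∀ i, Fintype (V i)]

lemma degree_multiJoin [DecidableEq ι] (i : ι) (v : V i) [Fintype ((G i).neighborSet v)]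
    [Fintype ((multiJoin G).neighborSet ⟨i, v⟩)] :
    (multiJoin G).degree ⟨i, v⟩ = (G i).degree v + ∑ j ∈ univ.erase i, Fintype.card (V j) := by
  classical
  have hnbr : (multiJoin G).neighborFinset ⟨i, v⟩ =
      ((G i).neighborFinset v).map (Function.Embedding.sigmaMk i) ∪
        (univ.erase i).sigma fun _ => univ := by
    ext ⟨j, u⟩
    by_cases hji : j = i
    · subst hji; simp
    · have hadj : (multiJoin G).Adj ⟨i, v⟩ ⟨j, u⟩ := multiJoin_adj_of_fst_ne G (Ne.symm hji)
      simp [hji, hadj]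
  have hdisj : Disjoint (((G i).neighborFinset v).map (Function.Embedding.sigmaMk i))
      ((univ.erase i).sigma fun _ => univ) := by
    simp [Finset.disjoint_left]
  rw [← card_neighborFinset_eq_degree, hnbr, card_union_of_disjoint hdisj, card_map,
    card_neighborFinset_eq_degree, card_sigma]
  simp only [card_univ]

lemma eccentricity_multiJoin {x : Σ i, V i} (hx : ∃ z : Σ i, V i, z.1 ≠ x.1)
    (hwc : ¬ IsWellConnected (G x.1) x.2) : eccentricity (multiJoin G) x = 2 := by
  obtain ⟨z, hz⟩ := hx
  have hxz : (multiJoin G).Adj x z := multiJoin_adj_of_fst_ne G hz.symm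
  refine le_antisymm ((eccentricity_le_iff _).2 fun y => ?_) ?_
  · by_cases hxy : x.1 = y.1
    · exact dist_le_two_of_adj_of_adj hxz (multiJoin_adj_of_fst_ne G (hxy ▸ hz))
    · exact (dist_le (multiJoin_adj_of_fst_ne G hxy).toWalk).trans (by simp)
  · obtain ⟨i, v⟩ := x
    obtain ⟨u, hu, hvu⟩ : ∃ u, u ≠ v ∧ ¬ (G i).Adj v u := by
      simpa [IsWellConnected] using hwc
    have hreach : (multiJoin G).Reachable ⟨i, v⟩ ⟨i, u⟩ :=
      ⟨.cons hxz (multiJoin_adj_of_fst_ne G (y := ⟨i, u⟩) hz).toWalk⟩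
    calc 2 ≤ (multiJoin G).dist ⟨i, v⟩ ⟨i, u⟩ :=
          hreach.one_lt_dist_of_ne_of_not_adj (by simpa using hu.symm) (by simpa using hvu)
      _ ≤ _ := dist_le_eccentricity _ _ _

end MultiJoin

section NJoin

variable {V : Type*} [Fintype V] (G : SimpleGraph V)

lemma degree_nJoin {n : ℕ} (i : Fin n) (v : V) [Fintype (G.neighborSet v)]
    [Fintype ((nJoin n G).neighborSet ⟨i, v⟩)] :
    (nJoin n G).degree ⟨i, v⟩ = G.degree v + (n - 1) * Fintype.card V := by
  classical
  convert degree_multiJoin (fun _ : Fin n => G) i v using 2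
  · rfl
  · simp [card_erase_of_mem]

lemma eccentricity_nJoin {n : ℕ} (hn : 2 ≤ n) {x : Σ _ : Fin n, V}
    (hwc : ¬ IsWellConnected G x.2) : eccentricity (nJoin n G) x = 2 := by
  obtain ⟨j, hj⟩ := Fintype.exists_ne_of_one_lt_card (by rwa [Fintype.card_fin]) x.1
  exact eccentricity_multiJoin _ ⟨⟨j, x.2⟩, hj⟩ hwc

lemma numEdges_nJoin (n : ℕ) :
    numEdges (nJoin n G) = n * numEdges G + n.choose 2 * Fintype.card V ^ 2 := by
  classical
  have hsum := (nJoin n G).sum_degrees_eq_twice_card_edges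
  simp only [← univ_sigma_univ, sum_sigma, degree_nJoin, sum_add_distrib,
    sum_degrees_eq_twice_card_edges, sum_const, card_univ, Fintype.card_fin, smul_eq_mul] at hsum
  have hchoose : 2 * n.choose 2 = n * (n - 1) := by
    rw [Nat.choose_two_right, Nat.mul_div_cancel' (Nat.even_mul_pred_self n).two_dvd]
  rw [numEdges_eq_card_edgeFinset, numEdges_eq_card_edgeFinset]
  linarith [congrArg (· * Fintype.card V ^ 2) hchoose]

end NJoin

theorem connEccIndex_nJoin_general {V : Type*} [Fintype V] (G : SimpleGraph V)
    (hwc : ∀ v : V, ¬ IsWellConnected G v)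
    (n : ℕ) (hn : 2 ≤ n) :
    connEccIndex (nJoin n G) =
      (n : ℚ) * (numEdges G : ℚ)
        + ((n : ℚ) * ((n : ℚ) - 1) / 2) * (Fintype.card V : ℚ) ^ 2 := by
  rw [connEccIndex_of_forall_eccentricity_eq _ fun x => eccentricity_nJoin G hn (hwc x.2),
    numEdges_nJoin]
  push_cast [Nat.cast_choose_two]
  ring

/-- The connective eccentric index of the join of `n` disjoint copies of a graph `G`
with no well-connected vertex equals `n|E(G)| + (n(n−1)/2)|V(G)|²`. -/
theorem connEccIndex_nJoin {V : Type*} [Fintype V] (G : SimpleGraph V)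
    (hV : 2 ≤ Fintype.card V) (hwc : ∀ v : V, ¬ IsWellConnected G v)
    (n : ℕ) (hn : 2 ≤ n) :
    connEccIndex (nJoin n G) =
      (n : ℚ) * (numEdges G : ℚ)
        + ((n : ℚ) * ((n : ℚ) - 1) / 2) * (Fintype.card V : ℚ) ^ 2 :=
  connEccIndex_nJoin_general G hwc n hn
end

section
/- Let G₁ and G₂ be finite connected simple graphs, each having at least two vertices and containing no well-connected vertex. Then the connective eccentric index of the symmetric difference G₁ ⊕ G₂ equals |E(G₁)|·|V(G₂)|² + |E(G₂)|·|V(G₁)|² − 4·|E(G₁)|·|E(G₂)|. -/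
/-- The symmetric difference `G₁ ⊕ G₂`: vertex set `V(G₁) × V(G₂)`, where `(u₁,u₂)` is
adjacent to `(v₁,v₂)` iff exactly one of `u₁ ~ v₁` in `G₁`, `u₂ ~ v₂` in `G₂` holds. -/
def symDiffGraph {V W : Type*} (G : SimpleGraph V) (H : SimpleGraph W) :
    SimpleGraph (V × W) where
  Adj x y := Xor' (G.Adj x.1 y.1) (H.Adj x.2 y.2)
  symm := by
    refine ⟨?_⟩
    intro x y h
    rcases h with ⟨h1, h2⟩ | ⟨h1, h2⟩
    · exact Or.inl ⟨G.adj_symm h1, fun hc => h2 (H.adj_symm hc)⟩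
    · exact Or.inr ⟨H.adj_symm h1, fun hc => h2 (G.adj_symm hc)⟩
  loopless := by
    refine ⟨?_⟩
    intro x h
    rcases h with ⟨h1, _⟩ | ⟨h1, _⟩
    · exact G.loopless.irrefl _ h1
    · exact H.loopless.irrefl _ h1

/-! Two vertices of `G ⊕ H` that are not adjacent always have a common neighbour, assembled from
neighbours in `G` and in `H`; so all eccentricities are at most 2, and exactly 2 once `G` has no
well-connected vertex (a non-neighbour `u'` of `u` gives the non-neighbour `(u', v)` of `(u, v)`).
Hence `C^ξ(G ⊕ H) = ∑ deg / 2 = |E(G ⊕ H)|`, which is counted from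
`deg (u, v) = d(u) (|W| - d(v)) + (|V| - d(u)) d(v)`. -/

@[simp]
lemma symDiffGraph_adj {V W : Type*} (G : SimpleGraph V) (H : SimpleGraph W) (x y : V × W) :
    (symDiffGraph G H).Adj x y ↔
      G.Adj x.1 y.1 ∧ ¬ H.Adj x.2 y.2 ∨ H.Adj x.2 y.2 ∧ ¬ G.Adj x.1 y.1 := Iff.rfl

section ConnEccIndex

variable {V : Type*} [Fintype V]

lemma eccentricity_eq_two {G : SimpleGraph V} {x : V}
    (hwalk : ∀ y, ∃ p : G.Walk x y, p.length ≤ 2) (hx : ¬ IsWellConnected G x) :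
    eccentricity G x = 2 := by
  refine le_antisymm (Finset.sup_le fun y _ => ?_) ?_
  · obtain ⟨p, hp⟩ := hwalk y
    exact (SimpleGraph.dist_le p).trans hp
  · obtain ⟨y, hyx, hxy⟩ : ∃ y, y ≠ x ∧ ¬ G.Adj x y := by
      simpa [IsWellConnected] using hx
    obtain ⟨p, -⟩ := hwalk y
    exact (p.reachable.one_lt_dist_of_ne_of_not_adj hyx.symm hxy).trans_le
      (Finset.le_sup (f := G.dist x) (Finset.mem_univ y))

lemma two_mul_numEdges (G : SimpleGraph V) [DecidableRel G.Adj] :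
    2 * (numEdges G : ℚ) = ∑ v, (G.degree v : ℚ) := by
  rw [numEdges, Set.ncard_eq_toFinset_card', ← SimpleGraph.edgeFinset]
  exact_mod_cast G.sum_degrees_eq_twice_card_edges.symm

lemma connEccIndex_eq_numEdges {G : SimpleGraph V} (h : ∀ v, eccentricity G v = 2) :
    connEccIndex G = numEdges G := by
  classical
  simp only [connEccIndex, h, Nat.cast_ofNat, ← Finset.sum_div, ← two_mul_numEdges]
  ring

end ConnEccIndex

section Distance

variable {V W : Type*} {G : SimpleGraph V} {H : SimpleGraph W}

lemma symDiffGraph_exists_common_adj (hG : ∀ u, ∃ a, G.Adj u a) (hH : ∀ v, ∃ b, H.Adj v b)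
    {x y : V × W} (hxy : ¬ (symDiffGraph G H).Adj x y) :
    ∃ m, (symDiffGraph G H).Adj x m ∧ (symDiffGraph G H).Adj m y := by
  obtain ⟨u, v⟩ := x
  obtain ⟨u', v'⟩ := y
  have hiff : G.Adj u u' ↔ H.Adj v v' := by simp only [symDiffGraph_adj] at hxy; tauto
  by_cases huu' : G.Adj u u'
  · exact ⟨(u', v), by simp [huu'], by simp [hiff.mp huu']⟩
  obtain ⟨a, hua⟩ := hG u
  obtain ⟨b, hv'b⟩ := hH v'
  by_cases hu'a : G.Adj u' a
  · exact ⟨(a, v), by simp [hua], by simp [hu'a.symm, hiff.not.mp huu']⟩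
  by_cases hvb : H.Adj v b
  · exact ⟨(u, b), by simp [hvb], by simp [hv'b.symm, huu']⟩
  · exact ⟨(a, b), by simp [hua, hvb], by simp [hv'b.symm, G.adj_comm a u', hu'a]⟩

lemma symDiffGraph_exists_walk_length_le_two (hG : ∀ u, ∃ a, G.Adj u a)
    (hH : ∀ v, ∃ b, H.Adj v b) (x y : V × W) :
    ∃ p : (symDiffGraph G H).Walk x y, p.length ≤ 2 := by
  by_cases hxy : (symDiffGraph G H).Adj x y
  · exact ⟨hxy.toWalk, by simp⟩
  · obtain ⟨m, hxm, hmy⟩ := symDiffGraph_exists_common_adj hG hH hxy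
    exact ⟨.cons hxm hmy.toWalk, by simp⟩

lemma not_isWellConnected_symDiffGraph {u : V} (hu : ¬ IsWellConnected G u) (v : W) :
    ¬ IsWellConnected (symDiffGraph G H) (u, v) := by
  simp only [IsWellConnected, not_forall] at hu ⊢
  obtain ⟨u', hu'u, hnadj⟩ := hu
  exact ⟨(u', v), by simpa using hu'u, by simpa using hnadj⟩

end Distance

section Degree

variable {V W : Type*} [Fintype V] [Fintype W]

lemma symDiffGraph_degree (G : SimpleGraph V) (H : SimpleGraph W) [DecidableRel G.Adj]
    [DecidableRel H.Adj] [DecidableRel (symDiffGraph G H).Adj] (u : V) (v : W) :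
    ((symDiffGraph G H).degree (u, v) : ℚ) =
      G.degree u * (Fintype.card W - H.degree v) + (Fintype.card V - G.degree u) * H.degree v := by
  classical
  have hnbr : (symDiffGraph G H).neighborFinset (u, v) =
      G.neighborFinset u ×ˢ (H.neighborFinset v)ᶜ ∪ (G.neighborFinset u)ᶜ ×ˢ H.neighborFinset v := by
    ext ⟨a, b⟩
    simp [and_comm]
  have hdisj : Disjoint (G.neighborFinset u ×ˢ (H.neighborFinset v)ᶜ)
      ((G.neighborFinset u)ᶜ ×ˢ H.neighborFinset v) := by
    rw [Finset.disjoint_left]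
    simp +contextual
  rw [← SimpleGraph.card_neighborFinset_eq_degree, hnbr, Finset.card_union_of_disjoint hdisj,
    Finset.card_product, Finset.card_product, Finset.card_compl, Finset.card_compl]
  push_cast [Finset.card_le_univ]
  simp only [SimpleGraph.card_neighborFinset_eq_degree]

lemma numEdges_symDiffGraph (G : SimpleGraph V) (H : SimpleGraph W) :
    (numEdges (symDiffGraph G H) : ℚ) =
      numEdges G * (Fintype.card W : ℚ) ^ 2 + numEdges H * (Fintype.card V : ℚ) ^ 2
        - 4 * numEdges G * numEdges H := by
  classical
  have h : 2 * (numEdges (symDiffGraph G H) : ℚ) = ∑ u, ∑ v,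
      (G.degree u * (Fintype.card W - H.degree v) + (Fintype.card V - G.degree u) * H.degree v :
        ℚ) := by
    simp only [two_mul_numEdges, Fintype.sum_prod_type, symDiffGraph_degree]
  simp only [mul_sub, sub_mul, Finset.sum_add_distrib, Finset.sum_sub_distrib, ← Finset.mul_sum,
    ← Finset.sum_mul, Finset.sum_const, Finset.card_univ, nsmul_eq_mul, ← two_mul_numEdges G,
    ← two_mul_numEdges H] at h
  linear_combination h / 2

end Degree

theorem connEccIndex_symDiff_general {V W : Type*} [Fintype V] [Fintype W]
    (G : SimpleGraph V) (H : SimpleGraph W)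
    (hGconn : G.Connected) (hHconn : H.Connected)
    (hV : 2 ≤ Fintype.card V) (hW : 2 ≤ Fintype.card W)
    (hG : ∀ v : V, ¬ IsWellConnected G v) :
    connEccIndex (symDiffGraph G H) =
      (numEdges G : ℚ) * (Fintype.card W : ℚ) ^ 2
        + (numEdges H : ℚ) * (Fintype.card V : ℚ) ^ 2
        - 4 * (numEdges G : ℚ) * (numEdges H : ℚ) := by
  have : Nontrivial V := Fintype.one_lt_card_iff_nontrivial.mp hV
  have : Nontrivial W := Fintype.one_lt_card_iff_nontrivial.mp hW
  have hecc (x : V × W) : eccentricity (symDiffGraph G H) x = 2 :=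
    eccentricity_eq_two
      (symDiffGraph_exists_walk_length_le_two hGconn.preconnected.exists_adj_of_nontrivial
        hHconn.preconnected.exists_adj_of_nontrivial x)
      (not_isWellConnected_symDiffGraph (hG x.1) x.2)
  rw [connEccIndex_eq_numEdges hecc, numEdges_symDiffGraph]

/-- The connective eccentric index of the symmetric difference of two connected graphs
without well-connected vertices equals
`|E(G₁)||V(G₂)|² + |E(G₂)||V(G₁)|² − 4|E(G₁)||E(G₂)|`. -/
theorem connEccIndex_symDiff {V W : Type*} [Fintype V] [Fintype W]
    (G : SimpleGraph V) (H : SimpleGraph W)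
    (hGconn : G.Connected) (hHconn : H.Connected)
    (hV : 2 ≤ Fintype.card V) (hW : 2 ≤ Fintype.card W)
    (hG : ∀ v : V, ¬ IsWellConnected G v) (hH : ∀ w : W, ¬ IsWellConnected H w) :
    connEccIndex (symDiffGraph G H) =
      (numEdges G : ℚ) * (Fintype.card W : ℚ) ^ 2
        + (numEdges H : ℚ) * (Fintype.card V : ℚ) ^ 2
        - 4 * (numEdges G : ℚ) * (numEdges H : ℚ) :=
  connEccIndex_symDiff_general G H hGconn hHconn hV hW hG
end
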